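/- Bernstein inequality: if f is a tempered distribution on ℝ^d whose Fourier transform is supported in the annulus {A₁2^j ≤ |ξ| ≤ A₂2^j}, then for all 1 ≤ p ≤ q ≤ ∞, ‖f‖_{L^q} ≤ C 2^{dj(1/p − 1/q)} ‖f‖_{L^p}, with C independent of f and j. -/

import Mathlib

noncomputable section
open MeasureTheory
open scoped ENNReal

variable {d : ℕ}

/-- Fourier transform on ℝ^d, angular frequency convention. -/
def ftn (f : EuclideanSpace ℝ (Fin d) → ℂ) (ξ : EuclideanSpace ℝ (Fin d)) : ℂ :=
  ∫ x, Complex.exp (-Complex.I * ((inner ℝ x ξ : ℝ) : ℂ)) * f x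

/-- Inverse Fourier transform on ℝ^d, angular frequency convention. -/
def iftn (f : EuclideanSpace ℝ (Fin d) → ℂ) (x : EuclideanSpace ℝ (Fin d)) : ℂ :=
  (((2 * Real.pi) ^ d)⁻¹ : ℝ) • ∫ ξ, Complex.exp (Complex.I * ((inner ℝ x ξ : ℝ) : ℂ)) * f ξ

/-- Homogeneous dyadic block `Δ̇_j f = ψ(2^{-j}D) f`. -/
def dyadicBlock (ψ : EuclideanSpace ℝ (Fin d) → ℝ) (j : ℤ)
    (f : EuclideanSpace ℝ (Fin d) → ℂ) : EuclideanSpace ℝ (Fin d) → ℂ :=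
  iftn (fun ξ => ((ψ ((2 : ℝ) ^ (-j) • ξ) : ℝ) : ℂ) * ftn f ξ)

/-- The `ℓ^r(ℤ)` norm of a family of extended nonnegative reals. -/
def lrNorm (r : ℝ≥0∞) (a : ℤ → ℝ≥0∞) : ℝ≥0∞ :=
  if r = ∞ then ⨆ j, a j else (∑' j, a j ^ r.toReal) ^ (1 / r.toReal)

/-- Homogeneous Besov norm `‖f‖_{Ḃ^s_{p,r}}` built from the Littlewood–Paley
function `ψ`. -/
def besovNorm (ψ : EuclideanSpace ℝ (Fin d) → ℝ) (s : ℝ) (p r : ℝ≥0∞)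
    (f : EuclideanSpace ℝ (Fin d) → ℂ) : ℝ≥0∞ :=
  lrNorm r (fun j =>
    ENNReal.ofReal ((2 : ℝ) ^ ((j : ℝ) * s)) * eLpNorm (dyadicBlock ψ j f) p volume)

/-!
If `𝓕 f` vanishes outside the ball of radius `cR`, then `f` reproduces itself under integration
against `K_R = 𝓕 (χ (R⁻¹ • ·))`, where `χ` is a Schwartz function equal to `1` on the ball of
radius `c`. Hölder's inequality gives `‖f‖_∞ ≤ ‖K_R‖_{p'} ‖f‖_p`, and scaling gives
`‖K_R‖_{p'} = R^{d/p} ‖𝓕 χ‖_{p'}`, which is bounded uniformly in `p'` by interpolating between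
`L¹` and `L^∞`. The `L^p → L^q` bound then follows from `‖f‖_q ≤ ‖f‖_∞^{1-p/q} ‖f‖_p^{p/q}`.
-/

open scoped FourierTransform RealInnerProductSpace SchwartzMap

theorem ENNReal.toReal_div_toReal_le_one {p q : ℝ≥0∞} (hpq : p ≤ q) : p.toReal / q.toReal ≤ 1 := by
  rcases eq_or_ne q ∞ with rfl | hq
  · simp
  · exact div_le_one_of_le₀ (ENNReal.toReal_mono hq hpq) ENNReal.toReal_nonneg

theorem ENNReal.HolderConjugate.inv_toReal_add_inv_toReal (p q : ℝ≥0∞) [p.HolderConjugate q] :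
    p.toReal⁻¹ + q.toReal⁻¹ = 1 := by
  have h := congrArg ENNReal.toReal (ENNReal.HolderConjugate.inv_add_inv_eq_one p q)
  rwa [ENNReal.toReal_add (ENNReal.inv_ne_top.2 (ENNReal.HolderConjugate.ne_zero p q))
    (ENNReal.inv_ne_top.2 (ENNReal.HolderConjugate.ne_zero q p)), ENNReal.toReal_inv,
    ENNReal.toReal_inv, ENNReal.toReal_one] at h

section Interpolation

variable {α E : Type*} [MeasurableSpace α] {μ : Measure α} [NormedAddCommGroup E]

theorem eLpNorm_le_eLpNormEssSup_rpow_mul_eLpNorm_rpow {f : α → E}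
    (hf : AEStronglyMeasurable f μ) {p q : ℝ≥0∞} (hp : p ≠ 0) (hpq : p ≤ q) (hq : q ≠ ∞) :
    eLpNorm f q μ ≤
      eLpNormEssSup f μ ^ (1 - p.toReal / q.toReal) * eLpNorm f p μ ^ (p.toReal / q.toReal) := by
  have hq0 : q ≠ 0 := (hp.bot_lt.trans_le hpq).ne'
  have hpt : p ≠ ∞ := ne_top_of_le_ne_top hq hpq
  set s := p.toReal
  set t := q.toReal
  have hs : 0 < s := ENNReal.toReal_pos hp hpt
  have ht : 0 < t := ENNReal.toReal_pos hq0 hq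
  have hst : s ≤ t := ENNReal.toReal_mono hq hpq
  set A := eLpNormEssSup f μ
  have hpow : ∫⁻ x, ‖f x‖ₑ ^ t ∂μ ≤ A ^ (t - s) * ∫⁻ x, ‖f x‖ₑ ^ s ∂μ := by
    rw [← lintegral_const_mul'' _ (hf.enorm.pow_const s)]
    refine lintegral_mono_ae ?_
    filter_upwards [enorm_ae_le_eLpNormEssSup f μ] with x hx
    calc ‖f x‖ₑ ^ t = ‖f x‖ₑ ^ (t - s) * ‖f x‖ₑ ^ s := by
          rw [← ENNReal.rpow_add_of_nonneg _ _ (by linarith) hs.le, sub_add_cancel]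
      _ ≤ A ^ (t - s) * ‖f x‖ₑ ^ s := by gcongr
  rw [eLpNorm_eq_lintegral_rpow_enorm_toReal hq0 hq, eLpNorm_eq_lintegral_rpow_enorm_toReal hp hpt]
  calc (∫⁻ x, ‖f x‖ₑ ^ t ∂μ) ^ (1 / t)
      ≤ (A ^ (t - s) * ∫⁻ x, ‖f x‖ₑ ^ s ∂μ) ^ (1 / t) := by gcongr
    _ = A ^ (1 - s / t) * ((∫⁻ x, ‖f x‖ₑ ^ s ∂μ) ^ (1 / s)) ^ (s / t) := by
        rw [ENNReal.mul_rpow_of_nonneg _ _ (by positivity), ← ENNReal.rpow_mul,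
          ← ENNReal.rpow_mul]
        congr 2 <;> field_simp

theorem eLpNorm_le_rpow_mul_eLpNorm_of_eLpNormEssSup_le {f : α → E}
    (hf : AEStronglyMeasurable f μ) {p q : ℝ≥0∞} (hp : p ≠ 0) (hpq : p ≤ q) {A : ℝ≥0∞}
    (hA : eLpNormEssSup f μ ≤ A * eLpNorm f p μ) :
    eLpNorm f q μ ≤ A ^ (1 - p.toReal / q.toReal) * eLpNorm f p μ := by
  rcases eq_or_ne q ∞ with rfl | hq
  · simpa using hA
  have hθ : 0 ≤ p.toReal / q.toReal := by positivity
  have hθ' : p.toReal / q.toReal ≤ 1 := ENNReal.toReal_div_toReal_le_one hpq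
  calc eLpNorm f q μ
      ≤ eLpNormEssSup f μ ^ (1 - p.toReal / q.toReal) *
          eLpNorm f p μ ^ (p.toReal / q.toReal) :=
        eLpNorm_le_eLpNormEssSup_rpow_mul_eLpNorm_rpow hf hp hpq hq
    _ ≤ (A * eLpNorm f p μ) ^ (1 - p.toReal / q.toReal) *
          eLpNorm f p μ ^ (p.toReal / q.toReal) := by gcongr
    _ = A ^ (1 - p.toReal / q.toReal) * eLpNorm f p μ := by
        rw [ENNReal.mul_rpow_of_nonneg _ _ (by linarith), mul_assoc,
          ← ENNReal.rpow_add_of_nonneg _ _ (by linarith) hθ, sub_add_cancel, ENNReal.rpow_one]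

theorem eLpNorm_le_max_eLpNorm_one_eLpNorm_top {f : α → E} (hf : AEStronglyMeasurable f μ)
    {r : ℝ≥0∞} (hr : 1 ≤ r) : eLpNorm f r μ ≤ max (eLpNorm f 1 μ) (eLpNorm f ∞ μ) := by
  rcases eq_or_ne r ∞ with rfl | hr'
  · exact le_max_right _ _
  set M := max (eLpNorm f 1 μ) (eLpNorm f ∞ μ)
  have hθ : 0 ≤ 1 / r.toReal := by positivity
  have hθ' : 1 / r.toReal ≤ 1 := by simpa using ENNReal.toReal_div_toReal_le_one hr
  calc eLpNorm f r μ
      ≤ eLpNormEssSup f μ ^ (1 - 1 / r.toReal) * eLpNorm f 1 μ ^ (1 / r.toReal) := by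
        simpa using eLpNorm_le_eLpNormEssSup_rpow_mul_eLpNorm_rpow hf one_ne_zero hr hr'
    _ ≤ M ^ (1 - 1 / r.toReal) * M ^ (1 / r.toReal) := by
        rw [← eLpNorm_exponent_top]
        gcongr
        exacts [le_max_right _ _, le_max_left _ _]
    _ = M := by
        rw [← ENNReal.rpow_add_of_nonneg _ _ (by linarith) hθ, sub_add_cancel, ENNReal.rpow_one]

end Interpolation

section Fourier

open Real

variable {V : Type*} [NormedAddCommGroup V] [InnerProductSpace ℝ V] [FiniteDimensional ℝ V]

theorem exists_schwartzMap_eq_one_of_norm_le (c : ℝ) :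
    ∃ χ : 𝓢(V, ℂ), ∀ ξ, ‖ξ‖ ≤ c → χ ξ = 1 := by
  let bump : ContDiffBump (0 : V) :=
    ⟨max c 1, max c 1 + 1, lt_max_of_lt_right one_pos, lt_add_one _⟩
  refine ⟨(bump.hasCompactSupport.comp_left Complex.ofReal_zero).toSchwartzMap
    (Complex.ofRealCLM.contDiff.comp bump.contDiff), fun ξ hξ => ?_⟩
  have h : bump ξ = 1 := bump.one_of_mem_closedBall
    (mem_closedBall_zero_iff.2 (hξ.trans (le_max_left c 1)))
  change ((bump ξ : ℝ) : ℂ) = 1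
  rw [h, Complex.ofReal_one]

variable [MeasurableSpace V] [BorelSpace V]

theorem MeasureTheory.Integrable.integral_fourier_mul_eq {f g : V → ℂ} (hf : Integrable f)
    (hg : Integrable g) : ∫ ξ, 𝓕 f ξ * g ξ = ∫ x, f x * 𝓕 g x := by
  have h := VectorFourier.integral_fourierIntegral_smul_eq_flip (L := innerₗ V)
    continuous_fourierChar continuous_inner hf hg
  rwa [flip_innerₗ] at h

theorem MeasureTheory.Integrable.integral_fourierInv_mul_eq {f g : V → ℂ} (hf : Integrable f)
    (hg : Integrable g) : ∫ ξ, 𝓕⁻ f ξ * g ξ = ∫ x, f x * 𝓕⁻ g x := by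
  have h := VectorFourier.integral_fourierIntegral_smul_eq_flip (L := -innerₗ V)
    continuous_fourierChar continuous_inner.neg hf hg
  have hflip : (-innerₗ V).flip = -innerₗ V := by
    ext x y
    simp [real_inner_comm]
  rwa [hflip] at h

theorem MeasureTheory.Integrable.ae_eq_fourierInv_fourier {f : V → ℂ} (hf : Integrable f)
    (h𝓕f : Integrable (𝓕 f)) : f =ᵐ[volume] 𝓕⁻ (𝓕 f) := by
  have hcont : Continuous (𝓕⁻ (𝓕 f)) := by
    rw [fourierInv_eq_fourier_comp_neg]
    exact VectorFourier.fourierIntegral_continuous continuous_fourierChar continuous_inner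
      h𝓕f.comp_neg
  refine ae_eq_of_integral_contDiff_smul_eq hf.locallyIntegrable hcont.locallyIntegrable
    fun g hg hg_supp => ?_
  set φ : 𝓢(V, ℂ) := (hg_supp.comp_left Complex.ofReal_zero).toSchwartzMap
    (Complex.ofRealCLM.contDiff.comp hg)
  have hφ : ∀ x, (g x : ℂ) = φ x := fun x => rfl
  have hφ_inv : Integrable (𝓕⁻ (φ : V → ℂ)) := by
    rw [← SchwartzMap.fourierInv_coe]
    exact (𝓕⁻ φ).integrable
  simp only [Complex.real_smul, hφ]
  calc ∫ x, φ x * f x = ∫ x, 𝓕 (𝓕⁻ (φ : V → ℂ)) x * f x := by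
        rw [← SchwartzMap.fourierInv_coe, ← SchwartzMap.fourier_coe,
          FourierTransform.fourier_fourierInv_eq]
    _ = ∫ ξ, 𝓕⁻ (φ : V → ℂ) ξ * 𝓕 f ξ := hφ_inv.integral_fourier_mul_eq hf
    _ = ∫ x, φ x * 𝓕⁻ (𝓕 f) x := φ.integrable.integral_fourierInv_mul_eq h𝓕f

theorem fourier_fourierChar_inner_smul_apply (w : V → ℂ) (x v : V) :
    𝓕 (fun ξ => 𝐞 ⟪ξ, x⟫ • w ξ) v = 𝓕 w (v - x) := by
  simp only [fourier_eq, smul_smul, ← AddChar.map_add_eq_mul, inner_sub_right]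
  congr! 4
  ring

theorem fourier_comp_inv_smul {E : Type*} [NormedAddCommGroup E] [NormedSpace ℂ E]
    (g : V → E) {R : ℝ} (hR : 0 < R) (z : V) :
    𝓕 (fun ξ => g (R⁻¹ • ξ)) z = (R ^ Module.finrank ℝ V) • 𝓕 g (R • z) := by
  have h := Measure.integral_comp_smul (μ := volume) (fun u => 𝐞 (-⟪u, R • z⟫) • g u) R⁻¹
  rw [fourier_eq, fourier_eq]
  simp only [real_inner_smul_left, real_inner_smul_right, ← mul_assoc, mul_inv_cancel₀ hR.ne',
    one_mul, inv_pow, inv_inv] at h ⊢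
  rw [h, abs_of_pos (pow_pos hR _)]

theorem eLpNorm_comp_smul {F : Type*} [NormedAddCommGroup F] {g : V → F}
    (hg : AEStronglyMeasurable g) {R : ℝ} (hR : 0 < R) (p : ℝ≥0∞) :
    eLpNorm (fun x => g (R • x)) p volume =
      ENNReal.ofReal (R ^ (-(Module.finrank ℝ V : ℝ) / p.toReal)) * eLpNorm g p volume := by
  have hmap := Measure.map_addHaar_smul (volume : Measure V) hR.ne'
  have hg' : AEStronglyMeasurable g (Measure.map (R • ·) volume) := by
    rw [hmap]
    exact hg.smul_measure _
  have hc : ENNReal.ofReal |(R ^ Module.finrank ℝ V)⁻¹| ≠ 0 := by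
    simp [hR.ne']
  change eLpNorm (g ∘ (R • ·)) p volume = _
  rw [← eLpNorm_map_measure hg' (measurable_const_smul R).aemeasurable, hmap,
    eLpNorm_smul_measure_of_ne_zero hc, smul_eq_mul,
    ENNReal.ofReal_rpow_of_nonneg (abs_nonneg _) ENNReal.toReal_nonneg]
  congr 2
  rw [abs_of_pos (by positivity), ← Real.rpow_natCast, ← Real.rpow_neg hR.le,
    ← Real.rpow_mul hR.le, one_div, ENNReal.toReal_inv, div_eq_mul_inv]

theorem ae_eq_integral_mul_fourier_sub {f w : V → ℂ} (hf : Integrable f)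
    (h𝓕f : Integrable (𝓕 f)) (hw : Integrable w) (hwf : ∀ ξ, w ξ * 𝓕 f ξ = 𝓕 f ξ) :
    f =ᵐ[volume] fun x => ∫ v, f v * 𝓕 w (v - x) := by
  filter_upwards [hf.ae_eq_fourierInv_fourier h𝓕f] with x hx
  have hmod : Integrable (fun ξ => 𝐞 ⟪ξ, x⟫ • w ξ) := by
    simpa using (fourierIntegral_convergent_iff (-x)).2 hw
  calc f x = ∫ ξ, 𝐞 ⟪ξ, x⟫ • 𝓕 f ξ := by rw [hx, fourierInv_eq]
    _ = ∫ ξ, 𝓕 f ξ * (𝐞 ⟪ξ, x⟫ • w ξ) := by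
        congr 1 with ξ
        conv_lhs => rw [← hwf ξ]
        simp only [Circle.smul_def, smul_eq_mul]
        ring
    _ = ∫ v, f v * 𝓕 (fun ξ => 𝐞 ⟪ξ, x⟫ • w ξ) v := hf.integral_fourier_mul_eq hmod
    _ = ∫ v, f v * 𝓕 w (v - x) := by simp_rw [fourier_fourierChar_inner_smul_apply]

theorem eLpNormEssSup_le_of_ae_eq_integral_mul_sub {f K : V → ℂ} (hf : AEStronglyMeasurable f)
    (hK : AEStronglyMeasurable K) {p q : ℝ≥0∞} [q.HolderConjugate p]
    (hrep : f =ᵐ[volume] fun x => ∫ v, f v * K (v - x)) :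
    eLpNormEssSup f volume ≤ eLpNorm K q volume * eLpNorm f p volume := by
  have hpt : ∀ x, ‖∫ v, f v * K (v - x)‖ₑ ≤ eLpNorm K q volume * eLpNorm f p volume := by
    intro x
    have hsub := measurePreserving_sub_right (volume : Measure V) x
    calc ‖∫ v, f v * K (v - x)‖ₑ ≤ ∫⁻ v, ‖f v * K (v - x)‖ₑ := enorm_integral_le_lintegral_enorm _
      _ = eLpNorm ((fun v => K (v - x)) • f) 1 volume := by
          simp only [eLpNorm_one_eq_lintegral_enorm, smul_eq_mul, Pi.mul_apply, mul_comm]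
      _ ≤ eLpNorm (fun v => K (v - x)) q volume * eLpNorm f p volume :=
          eLpNorm_smul_le_mul_eLpNorm hf (hK.comp_measurePreserving hsub)
      _ = eLpNorm K q volume * eLpNorm f p volume := by
          rw [← eLpNorm_comp_measurePreserving hK hsub]
          rfl
  calc eLpNormEssSup f volume = eLpNormEssSup (fun x => ∫ v, f v * K (v - x)) volume :=
        eLpNormEssSup_congr_ae hrep
    _ ≤ eLpNorm K q volume * eLpNorm f p volume := essSup_le_of_ae_le _ (.of_forall hpt)

theorem eLpNormEssSup_le_of_fourier_ne_zero_imp_norm_le {χ : 𝓢(V, ℂ)} {c R : ℝ} (hR : 0 < R)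
    (hχ : ∀ ξ, ‖ξ‖ ≤ c → χ ξ = 1) {f : V → ℂ} (hf : Integrable f)
    (hsupp : ∀ ξ, 𝓕 f ξ ≠ 0 → ‖ξ‖ ≤ c * R) {p : ℝ≥0∞} (hp : 1 ≤ p) :
    eLpNormEssSup f volume ≤ ENNReal.ofReal (R ^ ((Module.finrank ℝ V : ℝ) / p.toReal)) *
      eLpNorm (𝓕 (χ : V → ℂ)) p.conjExponent volume * eLpNorm f p volume := by
  have := ENNReal.HolderConjugate.conjExponent hp
  set w : V → ℂ := fun ξ => χ (R⁻¹ • ξ)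
  have h𝓕f : Integrable (𝓕 f) := by
    refine (VectorFourier.fourierIntegral_continuous continuous_fourierChar continuous_inner
      hf).integrable_of_hasCompactSupport
      (HasCompactSupport.intro (isCompact_closedBall 0 (c * R)) fun ξ hξ => ?_)
    by_contra h
    exact hξ (mem_closedBall_zero_iff.2 (hsupp ξ h))
  have hw : Integrable w :=
    (integrable_comp_smul_iff volume χ (inv_ne_zero hR.ne')).2 χ.integrable
  have hwf : ∀ ξ, w ξ * 𝓕 f ξ = 𝓕 f ξ := by
    intro ξ
    by_cases h : 𝓕 f ξ = 0
    · simp [h]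
    · have hξ : ‖R⁻¹ • ξ‖ ≤ c := by
        rw [norm_smul, norm_inv, norm_of_nonneg hR.le, inv_mul_le_iff₀ hR]
        linarith [hsupp ξ h]
      simp [w, hχ _ hξ]
  have hkernel : eLpNorm (𝓕 w) p.conjExponent volume =
      ENNReal.ofReal (R ^ ((Module.finrank ℝ V : ℝ) / p.toReal)) *
        eLpNorm (𝓕 (χ : V → ℂ)) p.conjExponent volume := by
    have hw' : 𝓕 w = (R ^ Module.finrank ℝ V : ℝ) • fun z => 𝓕 (χ : V → ℂ) (R • z) :=
      funext (fourier_comp_inv_smul _ hR)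
    rw [hw', eLpNorm_const_smul, eLpNorm_comp_smul (𝓕 χ).continuous.aestronglyMeasurable hR,
      ← mul_assoc, Real.enorm_eq_ofReal (by positivity), ← ENNReal.ofReal_mul (by positivity),
      ← Real.rpow_natCast, ← Real.rpow_add hR]
    congr 3
    have := ENNReal.HolderConjugate.inv_toReal_add_inv_toReal p p.conjExponent
    simp only [div_eq_mul_inv]
    linear_combination -(Module.finrank ℝ V : ℝ) * this
  calc eLpNormEssSup f volume ≤ eLpNorm (𝓕 w) p.conjExponent volume * eLpNorm f p volume :=
        eLpNormEssSup_le_of_ae_eq_integral_mul_sub hf.aestronglyMeasurable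
          (VectorFourier.fourierIntegral_continuous continuous_fourierChar continuous_inner
            hw).aestronglyMeasurable (ae_eq_integral_mul_fourier_sub hf h𝓕f hw hwf)
    _ = _ := by rw [hkernel]

theorem SchwartzMap.exists_eLpNorm_le_ofReal {F : Type*} [NormedAddCommGroup F]
    [NormedSpace ℝ F] (Φ : 𝓢(V, F)) :
    ∃ C : ℝ, 1 ≤ C ∧ ∀ r, 1 ≤ r → eLpNorm Φ r volume ≤ ENNReal.ofReal C := by
  set K := max (eLpNorm Φ 1 volume) (eLpNorm Φ ∞ volume)
  have hK : K ≠ ∞ :=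
    max_ne_top (Φ.memLp 1 volume).eLpNorm_ne_top (Φ.memLp_top volume).eLpNorm_ne_top
  refine ⟨max K.toReal 1, le_max_right _ _, fun r hr => ?_⟩
  calc eLpNorm Φ r volume ≤ K :=
        eLpNorm_le_max_eLpNorm_one_eLpNorm_top Φ.continuous.aestronglyMeasurable hr
    _ = ENNReal.ofReal K.toReal := (ENNReal.ofReal_toReal hK).symm
    _ ≤ ENNReal.ofReal (max K.toReal 1) := ENNReal.ofReal_le_ofReal (le_max_left _ _)

theorem exists_eLpNorm_le_of_fourier_ne_zero_imp_norm_le (c : ℝ) :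
    ∃ C : ℝ, 1 ≤ C ∧ ∀ R : ℝ, 0 < R → ∀ p q : ℝ≥0∞, 1 ≤ p → p ≤ q →
      ∀ f : V → ℂ, Integrable f → (∀ ξ, 𝓕 f ξ ≠ 0 → ‖ξ‖ ≤ c * R) →
        eLpNorm f q volume ≤ ENNReal.ofReal (C * R ^ ((Module.finrank ℝ V : ℝ) *
          (1 / p.toReal - 1 / q.toReal))) * eLpNorm f p volume := by
  obtain ⟨χ, hχ⟩ := exists_schwartzMap_eq_one_of_norm_le (V := V) c
  obtain ⟨C, hC, hΦ⟩ := SchwartzMap.exists_eLpNorm_le_ofReal (𝓕 χ)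
  rw [SchwartzMap.fourier_coe] at hΦ
  refine ⟨C, hC, fun R hR p q hp hpq f hf hsupp => ?_⟩
  set d : ℝ := (Module.finrank ℝ V : ℝ)
  have := ENNReal.HolderConjugate.conjExponent hp
  have hsup : eLpNormEssSup f volume ≤
      ENNReal.ofReal (C * R ^ (d / p.toReal)) * eLpNorm f p volume := by
    refine (eLpNormEssSup_le_of_fourier_ne_zero_imp_norm_le hR hχ hf hsupp hp).trans ?_
    rw [ENNReal.ofReal_mul (by positivity), mul_comm (ENNReal.ofReal C)]
    gcongr
    exact hΦ _ (ENNReal.HolderConjugate.one_le _ p)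
  have hθ : 0 ≤ 1 - p.toReal / q.toReal := by linarith [ENNReal.toReal_div_toReal_le_one hpq]
  refine (eLpNorm_le_rpow_mul_eLpNorm_of_eLpNormEssSup_le hf.aestronglyMeasurable
    (one_pos.trans_le hp).ne' hpq hsup).trans ?_
  gcongr
  rw [ENNReal.ofReal_rpow_of_nonneg (by positivity) hθ]
  refine ENNReal.ofReal_le_ofReal ?_
  have hexp : d / p.toReal * (1 - p.toReal / q.toReal) = d * (1 / p.toReal - 1 / q.toReal) := by
    rcases eq_or_ne p ∞ with rfl | hp'
    · simp [top_le_iff.1 hpq]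
    · have : p.toReal ≠ 0 := (ENNReal.toReal_pos (one_pos.trans_le hp).ne' hp').ne'
      field_simp
  rw [Real.mul_rpow (by positivity) (by positivity), ← Real.rpow_mul hR.le, hexp]
  gcongr
  calc C ^ (1 - p.toReal / q.toReal) ≤ C ^ (1 : ℝ) :=
        Real.rpow_le_rpow_of_exponent_le hC (sub_le_self _ (by positivity))
    _ = C := Real.rpow_one C

end Fourier

theorem fourier_eq_ftn (f : EuclideanSpace ℝ (Fin d) → ℂ) (ξ : EuclideanSpace ℝ (Fin d)) :
    𝓕 f ξ = ftn f ((2 * Real.pi) • ξ) := by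
  rw [Real.fourier_eq', ftn]
  congr 1 with x
  rw [smul_eq_mul, real_inner_smul_right]
  push_cast
  ring_nf

theorem stmt_13_general (d : ℕ) (A₁ A₂ : ℝ) :
    ∃ C : ℝ, 0 < C ∧ ∀ (j : ℤ) (p q : ℝ≥0∞), 1 ≤ p → p ≤ q →
      ∀ f : EuclideanSpace ℝ (Fin d) → ℂ, Integrable f volume →
        (∀ ξ, ftn f ξ ≠ 0 → A₁ * (2 : ℝ) ^ j ≤ ‖ξ‖ ∧ ‖ξ‖ ≤ A₂ * (2 : ℝ) ^ j) →
        eLpNorm f q volume ≤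
          ENNReal.ofReal
              (C * (2 : ℝ) ^ ((d : ℝ) * (j : ℝ) * (1 / p.toReal - 1 / q.toReal))) *
            eLpNorm f p volume := by
  obtain ⟨C, hC, hbound⟩ := exists_eLpNorm_le_of_fourier_ne_zero_imp_norm_le
    (V := EuclideanSpace ℝ (Fin d)) (A₂ / (2 * Real.pi))
  refine ⟨C, one_pos.trans_le hC, fun j p q hp hpq f hf hsupp => ?_⟩
  have hsupp' : ∀ ξ, 𝓕 f ξ ≠ 0 → ‖ξ‖ ≤ A₂ / (2 * Real.pi) * (2 : ℝ) ^ (j : ℝ) := by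
    intro ξ hξ
    have h := (hsupp _ (fourier_eq_ftn f ξ ▸ hξ)).2
    rw [norm_smul, Real.norm_of_nonneg Real.two_pi_pos.le] at h
    rw [Real.rpow_intCast, div_mul_eq_mul_div, le_div_iff₀ Real.two_pi_pos]
    linarith
  have h := hbound _ (by positivity) p q hp hpq f hf hsupp'
  rwa [finrank_euclideanSpace_fin, ← Real.rpow_mul zero_le_two, ← mul_assoc,
    mul_comm (j : ℝ)] at h

/-- Bernstein inequality: if `f̂` is supported in the annulus
`{A₁2^j ≤ |ξ| ≤ A₂2^j}`, then for `1 ≤ p ≤ q ≤ ∞`,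
`‖f‖_{L^q} ≤ C 2^{dj(1/p - 1/q)} ‖f‖_{L^p}` with `C = C(d, A₁, A₂)`. -/
theorem stmt_13 (d : ℕ) (hd : 0 < d) (A₁ A₂ : ℝ) (hA₁ : 0 < A₁) (hA : A₁ < A₂) :
    ∃ C : ℝ, 0 < C ∧ ∀ (j : ℤ) (p q : ℝ≥0∞), 1 ≤ p → p ≤ q →
      ∀ f : EuclideanSpace ℝ (Fin d) → ℂ, Integrable f volume →
        (∀ ξ, ftn f ξ ≠ 0 → A₁ * (2 : ℝ) ^ j ≤ ‖ξ‖ ∧ ‖ξ‖ ≤ A₂ * (2 : ℝ) ^ j) →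
        eLpNorm f q volume ≤
          ENNReal.ofReal
              (C * (2 : ℝ) ^ ((d : ℝ) * (j : ℝ) * (1 / p.toReal - 1 / q.toReal))) *
            eLpNorm f p volume :=
  stmt_13_general d A₁ A₂
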